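/- arXiv:2302.12531 — 3 statements merged into one kernel-verified Lean document; each statement's English description precedes it below -/
import Mathlib

section
/- Let N = 2d+1 with Chafee-Infante permutation σ_d (σ_d(j)=j for odd j, σ_d(j)=N+1-j for even j). Then the suspension of σ_d equals σ_{d+1}: with Λ : S_{2d+1} → S_{2d+3} and κ the flip on {1,…,2d+1}, one has Λ(κ σ_d) = σ_{d+1}. -/
/-- The lift `Λ : S_N → S_{N+2}`. -/
def meanderLift (N : ℕ) (σ : ℕ → ℕ) : ℕ → ℕ :=
  fun j => if j = 1 ∨ j = N + 2 then j else σ (j - 1) + 1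

/-- The Chafee–Infante permutation `σ_d` on `{1,…,2d+1}`. -/
def chafeeInfante (d : ℕ) : ℕ → ℕ :=
  fun j => if Odd j then j else 2 * d + 2 - j

/-- The suspension of `σ_d` equals `σ_{d+1}`: `Λ(κ σ_d) = σ_{d+1}` on `{1,…,2d+3}`. -/
theorem chafee_infante_suspension (d : ℕ) :
    ∀ j ∈ Set.Icc 1 (2 * d + 3),
      meanderLift (2 * d + 1) (fun k => 2 * d + 2 - chafeeInfante d k) j =
        chafeeInfante (d + 1) j := by
  intro j hj
  simp only [Set.mem_Icc] at hj
  simp only [meanderLift, chafeeInfante, Nat.odd_iff]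
  have := Nat.mod_two_eq_zero_or_one j
  have : (j - 1) % 2 = 1 ↔ ¬ (j % 2 = 1) := by omega
  split_ifs <;> omega
end

section
/- For the Chafee-Infante permutation σ_d ∈ S_{2d+1}, the Morse numbers defined by i_1 = 0 and i_{j+1} = i_j + (-1)^{j+1}·sign(σ_d^{-1}(j+1) − σ_d^{-1}(j)) satisfy: i_j = j−1 for 1 ≤ j ≤ d+1, and i_j = 2d+1−j for d+1 ≤ j ≤ 2d+1. In particular i_j ≥ 0 for all j, the maximum value is i_{d+1} = d, and i_{2d+1} = 0. -/
/-- Morse numbers of `σ_d`: with `τ` the inverse of `σ_d` on `{1,…,2d+1}`, and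
`i 1 = 0`, `i (j+1) = i j + (-1)^(j+1)·sign(τ(j+1) - τ j)`, one has `i j = j-1` for
`1 ≤ j ≤ d+1` and `i j = 2d+1-j` for `d+1 ≤ j ≤ 2d+1`; in particular `i j ≥ 0`,
`i (d+1) = d`, and `i (2d+1) = 0`. -/
theorem chafee_infante_morse_numbers (d : ℕ) (τ : ℕ → ℕ)
    (hinv : ∀ j ∈ Set.Icc 1 (2 * d + 1),
      τ (chafeeInfante d j) = j ∧ chafeeInfante d (τ j) = j)
    (i : ℕ → ℤ) (hi1 : i 1 = 0)
    (hrec : ∀ j, 1 ≤ j → j ≤ 2 * d →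
      i (j + 1) = i j + (-1) ^ (j + 1) * Int.sign ((τ (j + 1) : ℤ) - (τ j : ℤ))) :
    (∀ j, 1 ≤ j → j ≤ d + 1 → i j = (j : ℤ) - 1) ∧
    (∀ j, d + 1 ≤ j → j ≤ 2 * d + 1 → i j = 2 * (d : ℤ) + 1 - j) ∧
    (∀ j, 1 ≤ j → j ≤ 2 * d + 1 → 0 ≤ i j) ∧
    i (d + 1) = d ∧ i (2 * d + 1) = 0 := by
  have hinvol : ∀ j ∈ Set.Icc 1 (2*d+1), chafeeInfante d j ∈ Set.Icc (1:ℕ) (2*d+1) ∧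
      chafeeInfante d (chafeeInfante d j) = j := by
    intro j hj
    simp only [Set.mem_Icc] at hj ⊢
    unfold chafeeInfante
    rcases Nat.even_or_odd j with he | ho
    · have h1 : ¬ Odd j := Nat.not_odd_iff_even.mpr he
      have h2 : ¬ Odd (2*d+2-j) := by
        rcases he with ⟨k, hk⟩
        rintro ⟨m, hm⟩; omega
      rw [if_neg h1, if_neg h2]
      refine ⟨⟨by omega, by omega⟩, by omega⟩
    · rw [if_pos ho, if_pos ho]
      exact ⟨⟨by omega, by omega⟩, rfl⟩
  have hτ : ∀ j ∈ Set.Icc 1 (2*d+1), τ j = chafeeInfante d j := by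
    intro j hj
    obtain ⟨hmem, hcc⟩ := hinvol j hj
    have h := (hinv _ hmem).1
    rwa [hcc] at h
  have hstep : ∀ j, 1 ≤ j → j ≤ 2*d → i (j+1) = i j + (if j ≤ d then 1 else -1) := by
    intro j h1 h2
    rw [hrec j h1 h2, hτ j ⟨h1, by omega⟩, hτ (j+1) ⟨by omega, by omega⟩]
    unfold chafeeInfante
    have hc : ((2*d+2-j : ℕ) : ℤ) = 2*(d:ℤ)+2-(j:ℤ) := by
      have : j ≤ 2*d+2 := by omega
      omega
    have hc1 : ((2*d+2-(j+1) : ℕ) : ℤ) = 2*(d:ℤ)+2-((j:ℤ)+1) := by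
      have : j+1 ≤ 2*d+2 := by omega
      push_cast
      omega
    rcases Nat.even_or_odd j with he | ho
    · have hj : ¬ Odd j := Nat.not_odd_iff_even.mpr he
      have hj1 : Odd (j+1) := he.add_one
      have hpow : ((-1:ℤ)) ^ (j+1) = -1 := hj1.neg_one_pow
      rw [if_neg hj, if_pos hj1, hpow, hc]
      by_cases hd : j ≤ d
      · have hs : Int.sign (((j:ℤ)+1) - (2*(d:ℤ)+2-(j:ℤ))) = -1 := by
          apply Int.sign_eq_neg_one_of_neg
          omega
        push_cast
        rw [hs, if_pos hd]
        ring
      · have hs : Int.sign (((j:ℤ)+1) - (2*(d:ℤ)+2-(j:ℤ))) = 1 := by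
          apply Int.sign_eq_one_of_pos
          have : d + 1 ≤ j := by omega
          have : (d:ℤ) + 1 ≤ (j:ℤ) := by exact_mod_cast this
          omega
        push_cast
        rw [hs, if_neg hd]
        ring
    · have hj1 : ¬ Odd (j+1) := by
        rcases ho with ⟨k, hk⟩
        rintro ⟨m, hm⟩; omega
      have hpow : ((-1:ℤ)) ^ (j+1) = 1 := by
        have : Even (j+1) := ho.add_one
        exact this.neg_one_pow
      rw [if_pos ho, if_neg hj1, hpow, hc1]
      by_cases hd : j ≤ d
      · have hs : Int.sign ((2*(d:ℤ)+2-((j:ℤ)+1)) - (j:ℤ)) = 1 := by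
          apply Int.sign_eq_one_of_pos
          have : (j:ℤ) ≤ (d:ℤ) := by exact_mod_cast hd
          omega
        rw [hs, if_pos hd]
        ring
      · have hs : Int.sign ((2*(d:ℤ)+2-((j:ℤ)+1)) - (j:ℤ)) = -1 := by
          apply Int.sign_eq_neg_one_of_neg
          have : d + 1 ≤ j := by omega
          have : (d:ℤ) + 1 ≤ (j:ℤ) := by exact_mod_cast this
          omega
        rw [hs, if_neg hd]
        ring
  have A : ∀ j, 1 ≤ j → j ≤ d + 1 → i j = (j : ℤ) - 1 := by
    intro j h1 h2
    induction j with
    | zero => omega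
    | succ n ih =>
      rcases Nat.eq_zero_or_pos n with hn | hn
      · subst hn; simpa using hi1
      · have hd : n ≤ d := by omega
        rw [hstep n hn (by omega), ih hn (by omega), if_pos hd]
        push_cast; ring
  have B : ∀ j, d + 1 ≤ j → j ≤ 2*d+1 → i j = 2 * (d : ℤ) + 1 - j := by
    intro j hj
    induction j, hj using Nat.le_induction with
    | base =>
      intro _
      have := A (d+1) (by omega) le_rfl
      push_cast at this ⊢
      omega
    | succ n hn ih =>
      intro h2
      rw [hstep n (by omega) (by omega), ih (by omega), if_neg (by omega)]
      push_cast; ring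
  refine ⟨A, B, ?_, ?_, ?_⟩
  · intro j h1 h2
    by_cases hd : j ≤ d + 1
    · rw [A j h1 hd]
      have : (1:ℤ) ≤ (j:ℤ) := by exact_mod_cast h1
      omega
    · rw [B j (by omega) h2]
      have : (j:ℤ) ≤ 2*(d:ℤ)+1 := by exact_mod_cast h2
      omega
  · have := A (d+1) (by omega) le_rfl
    push_cast at this ⊢; omega
  · have := B (2*d+1) (by omega) le_rfl
    push_cast at this ⊢; omega
end

section
/- Fix q ≥ 1, N = 4q+3, and let κ(j) = N+1−j = 4q+4−j. With σ_{q1}, σ_{1q} ∈ S_N as defined by their explicit formulas, one has κ σ_{q1}^{-1} κ = σ_{1q}. Equivalently, σ_{q1} = κ σ_{1q}^{-1} κ. -/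
/-- The primitive 3-nose Sturm permutation `σ_{q1}` on `{1,…,4q+3}`. -/
def sigmaq1 (q : ℕ) : ℕ → ℕ := fun j =>
  if j % 4 = 0 then 2 * q - 2 * (j / 4) + 2
  else if j % 4 = 1 then 2 * (j / 4) + 1
  else if j % 4 = 2 then 4 * q - 2 * (j / 4) + 2
  else 2 * q + 2 * (j / 4) + 3

/-- The primitive 3-nose Sturm permutation `σ_{1q}` on `{1,…,4q+3}`. -/
def sigma1q (q : ℕ) : ℕ → ℕ := fun j =>
  if Odd j then
    (if (j - 1) / 2 ≤ q then 4 * ((j - 1) / 2) + 1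
     else 4 * ((j - 1) / 2 - q - 1) + 3)
  else
    (if j / 2 ≤ q + 1 then 4 * (q + 1 - j / 2) + 2
     else 4 * (2 * q + 2 - j / 2))

/-- `σ_{1q}` maps `{1,…,4q+3}` into itself. -/
lemma sigma1q_mem_aux (q : ℕ) {j : ℕ} (hj : 1 ≤ j ∧ j ≤ 4*q+3) :
    1 ≤ sigma1q q j ∧ sigma1q q j ≤ 4*q+3 := by
  simp only [sigma1q, Nat.odd_iff]; split_ifs <;> omega

/-- `σ_{q1}` maps `{1,…,4q+3}` into itself. -/
lemma sigmaq1_mem_aux (q : ℕ) (hq : 1 ≤ q) {j : ℕ} (hj : 1 ≤ j ∧ j ≤ 4*q+3) :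
    1 ≤ sigmaq1 q j ∧ sigmaq1 q j ≤ 4*q+3 := by
  simp only [sigmaq1]; split_ifs <;> omega

/-- The key identity: `σ_{q1} ∘ κ ∘ σ_{1q} = κ` on `{1,…,4q+3}`. -/
lemma key_aux (q : ℕ) (hq : 1 ≤ q) {j : ℕ} (hj : 1 ≤ j ∧ j ≤ 4*q+3) :
    sigmaq1 q (4*q+4 - sigma1q q j) = 4*q+4 - j := by
  simp only [sigma1q, sigmaq1, Nat.odd_iff]; split_ifs <;> omega

/-- Second-part core: `σ_{1q} ∘ κ ∘ σ_{q1} = κ`, derived from `key_aux` using the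
inverse `τ` of `σ_{q1}`. -/
lemma key_aux2 (q : ℕ) (hq : 1 ≤ q) (τ : ℕ → ℕ)
    (hτ : ∀ j, (1 ≤ j ∧ j ≤ 4*q+3) →
      τ (sigmaq1 q j) = j ∧ sigmaq1 q (τ j) = j)
    (j t : ℕ) (hj : 1 ≤ j ∧ j ≤ 4*q+3) (hts : sigmaq1 q j = t) :
    sigma1q q (4*q+4 - t) = 4*q+4 - j := by
  have ht := sigmaq1_mem_aux q hq hj
  rw [hts] at ht
  have hu : 1 ≤ 4*q+4 - t ∧ 4*q+4 - t ≤ 4*q+3 := by omega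
  have hsu := sigma1q_mem_aux q hu
  have hk := key_aux q hq hu
  have hflip : 1 ≤ 4*q+4 - sigma1q q (4*q+4-t) ∧ 4*q+4 - sigma1q q (4*q+4-t) ≤ 4*q+3 := by
    omega
  have hτ1 := (hτ _ hflip).1
  rw [hk] at hτ1
  have heq : 4*q+4 - (4*q+4-t) = t := by omega
  rw [heq] at hτ1
  have hτ2 := (hτ j hj).1
  rw [hts] at hτ2
  omega

/-- With flip `κ j = 4q+4-j`, one has `κ σ_{q1}⁻¹ κ = σ_{1q}` and, equivalently,
`σ_{q1} = κ σ_{1q}⁻¹ κ`, on `{1,…,4q+3}`. -/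
theorem trivial_equivalence_q1_1q (q : ℕ) (hq : 1 ≤ q) (τ ρ : ℕ → ℕ)
    (hτ : ∀ j ∈ Set.Icc 1 (4 * q + 3),
      τ (sigmaq1 q j) = j ∧ sigmaq1 q (τ j) = j)
    (hρ : ∀ j ∈ Set.Icc 1 (4 * q + 3),
      ρ (sigma1q q j) = j ∧ sigma1q q (ρ j) = j)
    (hτmem : ∀ j ∈ Set.Icc 1 (4 * q + 3), τ j ∈ Set.Icc 1 (4 * q + 3))
    (hρmem : ∀ j ∈ Set.Icc 1 (4 * q + 3), ρ j ∈ Set.Icc 1 (4 * q + 3)) :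
    (∀ j ∈ Set.Icc 1 (4 * q + 3),
      4 * q + 4 - τ (4 * q + 4 - j) = sigma1q q j) ∧
    (∀ j ∈ Set.Icc 1 (4 * q + 3),
      sigmaq1 q j = 4 * q + 4 - ρ (4 * q + 4 - j)) := by
  simp only [Set.mem_Icc] at *
  constructor
  · intro j hj
    have hs := sigma1q_mem_aux q hj
    have hflip : 1 ≤ 4*q+4 - sigma1q q j ∧ 4*q+4 - sigma1q q j ≤ 4*q+3 := by omega
    have hk := key_aux q hq hj
    have hτ1 := (hτ _ hflip).1
    rw [hk] at hτ1
    omega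
  · intro j hj
    have ht := sigmaq1_mem_aux q hq hj
    have hk2 := key_aux2 q hq τ hτ j (sigmaq1 q j) hj rfl
    have hu : 1 ≤ 4*q+4 - sigmaq1 q j ∧ 4*q+4 - sigmaq1 q j ≤ 4*q+3 := by omega
    have hρ1 := (hρ _ hu).1
    rw [hk2] at hρ1
    omega
end
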